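/- Assume (A), i.e. F(·|x) is continuous on (−∞,τ_c(x)], G(·|x) is continuous on (−∞,τ_c(x)) and G(τ_c(x)|x)−G(τ_c(x)⁻|x)>0, and let H(·|x), H^u(·|x) be the induced conditional distribution of T and sub-distribution of uncensored observations with H(τ_c(x)⁻|x)<1. Then for every t≤τ_c(x) and every realization (T,δ)∈ℝ×{0,1} with T≤τ_c(x): ∫_{(−∞,t]} (1{T<s}−H(s⁻|x))/(1−H(s⁻|x))² dH^u(s|x) + (1{T≤t,δ=1}−H^u(t|x))/(1−H(t⁻|x)) − ∫_{(−∞,t]} (1{T≤s,δ=1}−H^u(s|x))/(1−H(s⁻|x))² dH(s⁻|x) = 1{δ=1,T≤t}/(1−H(T⁻|x)) − ∫_{(−∞,T∧t]} dH^u(s|x)/(1−H(s⁻|x))²; equivalently, the influence function g(t,T,δ|x) of the Beran estimator can be rewritten as g(t,T,δ|x)=(1−F(t|x)){1{δ=1,T≤t}/(1−H(T⁻|x)) − ∫_{(−∞,T∧t]} dH^u(s|x)/(1−H(s⁻|x))²}. -/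

import Mathlib

open MeasureTheory Set Function

/-- The influence function `g(t, T, δ | x)` appearing in the i.i.d. representation of the
Beran estimator. -/
noncomputable def infl (H Hu : StieltjesFunction ℝ) (Fx : ℝ → ℝ) (t Ti : ℝ) (di : Bool) : ℝ :=
  (1 - Fx t) *
    ((∫ s in Iic t, ((if Ti < s then (1 : ℝ) else 0) - leftLim (⇑H) s) /
        (1 - leftLim (⇑H) s) ^ 2 ∂Hu.measure)
      + ((if Ti ≤ t ∧ di = true then (1 : ℝ) else 0) - Hu t) / (1 - leftLim (⇑H) t)
      - ∫ s in Iio t, ((if Ti ≤ s ∧ di = true then (1 : ℝ) else 0) - Hu s) /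
          (1 - leftLim (⇑H) s) ^ 2 ∂H.measure)

open Filter Topology

/-! For `b ≤ τ_c` the map `H` is continuous on `(-∞, b)`, so it pushes `dH` restricted there
forward to Lebesgue measure on `(0, H(b⁻))` (the probability integral transform); hence
`∫_{(-∞,b)} dH(s) / (1 - H(s⁻))² = 1 / (1 - H(b⁻)) - 1`. Inserting this expression for
`1 / (1 - H(s⁻))` and swapping the integrals gives the integration by parts formula
`∫_{(-∞,t]} dHᵘ / (1 - H(s⁻)) = Hᵘ(t) / (1 - H(t⁻)) - ∫_{(-∞,t)} Hᵘ dH / (1 - H(s⁻))²`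
which cancels every `Hᵘ` term of the influence function. What is left of the last integral is
`∫_{[T,t)} dH / (1 - H(s⁻))² = 1 / (1 - H(t⁻)) - 1 / (1 - H(T⁻))`. -/

theorem MeasureTheory.Measure.ext_of_Iio_finite {α : Type*} [TopologicalSpace α]
    {m : MeasurableSpace α} [SecondCountableTopology α] [LinearOrder α] [OrderTopology α]
    [BorelSpace α] (μ ν : Measure α) [IsFiniteMeasure μ] (hμν : μ univ = ν univ)
    (h : ∀ a, μ (Iio a) = ν (Iio a)) : μ = ν := by
  have : IsFiniteMeasure ν := ⟨hμν ▸ measure_lt_top μ univ⟩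
  refine ext_of_Ico_finite μ ν hμν fun a b hab => ?_
  rw [← Iio_sdiff_Iio, measure_sdiff (Iio_subset_Iio hab.le) nullMeasurableSet_Iio,
    measure_sdiff (Iio_subset_Iio hab.le) nullMeasurableSet_Iio, h, h] <;> finiteness

namespace StieltjesFunction

variable (f : StieltjesFunction ℝ)

theorem exists_preimage_Iio_eq_Iio {y : ℝ} (hlt : ∃ s, f s < y) (hle : ∃ s, y ≤ f s) :
    ∃ u, f ⁻¹' Iio y = Iio u ∧ leftLim f u ≤ y ∧ y ≤ f u := by
  set S := f ⁻¹' Iio y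
  obtain ⟨s₀, hs₀⟩ := hlt
  have hbdd : BddAbove S := by
    obtain ⟨s₁, hs₁⟩ := hle
    exact ⟨s₁, fun v hv => (f.mono.reflect_lt (lt_of_lt_of_le hv hs₁)).le⟩
  have hyu : y ≤ f (sSup S) := by
    refine ge_of_tendsto ((f.right_continuous _).mono Ioi_subset_Ici_self) ?_
    filter_upwards [self_mem_nhdsWithin] with v hv
    exact not_lt.1 fun hvS => (le_csSup hbdd hvS).not_gt hv
  have hS : S = Iio (sSup S) := by
    ext v
    refine ⟨fun hv => f.mono.reflect_lt (lt_of_lt_of_le hv hyu), fun hv => ?_⟩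
    obtain ⟨w, hwS, hvw⟩ := exists_lt_of_lt_csSup ⟨s₀, hs₀⟩ hv
    exact lt_of_le_of_lt (f.mono hvw.le) hwS
  refine ⟨sSup S, hS, ?_, hyu⟩
  refine le_of_tendsto (f.mono.tendsto_leftLim _) ?_
  filter_upwards [self_mem_nhdsWithin] with v hv
  exact (show v ∈ S from hS ▸ hv).le

theorem map_measure_restrict_Iio {l b : ℝ} (hf : Tendsto f atBot (𝓝 l))
    (hcont : ContinuousOn f (Iio b)) :
    (f.measure.restrict (Iio b)).map f = volume.restrict (Ioo l (leftLim f b)) := by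
  have hmeas : Measurable f := f.mono.measurable
  have hl : ∀ x, l ≤ f x := f.mono.le_of_tendsto hf
  have : IsFiniteMeasure (f.measure.restrict (Iio b)) :=
    ⟨by simp [f.measure_Iio hf]⟩
  refine Measure.ext_of_Iio_finite _ _ ?_ fun y => ?_
  · rw [Measure.map_apply hmeas MeasurableSet.univ, preimage_univ, Measure.restrict_apply_univ,
      Measure.restrict_apply_univ, f.measure_Iio hf, Real.volume_Ioo]
  rw [Measure.map_apply hmeas measurableSet_Iio, Measure.restrict_apply (hmeas measurableSet_Iio),
    Measure.restrict_apply measurableSet_Iio, Iio_inter_Ioo]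
  rcases le_or_gt y l with hyl | hly
  · have : f ⁻¹' Iio y = ∅ :=
      eq_empty_of_forall_notMem fun s hs => (hl s).not_gt (lt_of_lt_of_le hs hyl)
    simp [this, hyl]
  rcases lt_or_ge (leftLim f b) y with hcy | hyc
  · have : f ⁻¹' Iio y ∩ Iio b = Iio b :=
      inter_eq_right.2 fun s hs => lt_of_le_of_lt (f.mono.le_leftLim hs) hcy
    rw [this, min_eq_right hcy.le, f.measure_Iio hf, Real.volume_Ioo]
  obtain ⟨u, hu, hul, hyu⟩ := f.exists_preimage_Iio_eq_Iio
    (hf.eventually (gt_mem_nhds hly)).exists ⟨b, hyc.trans (f.mono.leftLim_le le_rfl)⟩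
  have hub : u ≤ b := not_lt.1 fun hbu =>
    (show b ∈ f ⁻¹' Iio y from hu ▸ hbu).not_ge (hyc.trans (f.mono.leftLim_le le_rfl))
  have hleftLim : leftLim f u = y := by
    rcases hub.lt_or_eq with hub | rfl
    · rw [(hcont.continuousAt (Iio_mem_nhds hub)).continuousWithinAt.leftLim_eq] at hul ⊢
      exact le_antisymm hul hyu
    · exact le_antisymm hul hyc
  rw [hu, Iio_inter_Iio, min_eq_left hub, min_eq_left hyc, f.measure_Iio hf, hleftLim,
    Real.volume_Ioo]

theorem integral_comp_restrict_Iio {E : Type*} [NormedAddCommGroup E] [NormedSpace ℝ E]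
    {l b : ℝ} (hf : Tendsto f atBot (𝓝 l)) (hcont : ContinuousOn f (Iio b)) {g : ℝ → E}
    (hg : AEStronglyMeasurable g (volume.restrict (Ioo l (leftLim f b)))) :
    ∫ s in Iio b, g (f s) ∂f.measure = ∫ y in Ioo l (leftLim f b), g y := by
  rw [← f.map_measure_restrict_Iio hf hcont] at hg ⊢
  exact (integral_map f.mono.measurable.aemeasurable hg).symm

theorem setIntegral_Iic_setIntegral_Iio {l : ℝ} (hf : Tendsto f atBot (𝓝 l)) {ν : Measure ℝ}
    [SFinite ν] {q : ℝ → ℝ} {t : ℝ} (hq : IntegrableOn q (Iio t) ν) :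
    ∫ s in Iic t, (∫ u in Iio s, q u ∂ν) ∂f.measure
      = ∫ u in Iio t, (f t - f u) * q u ∂ν := by
  have : IsFiniteMeasure (f.measure.restrict (Iic t)) := ⟨by simp [f.measure_Iic hf]⟩
  set K : ℝ × ℝ → ℝ := {p | p.2 < p.1}.indicator fun p => q p.2
  have hint : Integrable K ((f.measure.restrict (Iic t)).prod (ν.restrict (Iio t))) :=
    (hq.comp_snd _).indicator (measurableSet_lt measurable_snd measurable_fst)
  calc ∫ s in Iic t, (∫ u in Iio s, q u ∂ν) ∂f.measure
      = ∫ s in Iic t, (∫ u in Iio t, K (s, u) ∂ν) ∂f.measure := by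
        refine setIntegral_congr_fun measurableSet_Iic fun s hs => ?_
        have hK : (fun u => K (s, u)) = (Iio s).indicator q := by
          ext u; simp [K, indicator_apply]
        rw [hK, integral_indicator measurableSet_Iio,
          Measure.restrict_restrict measurableSet_Iio, inter_eq_left.2 (Iio_subset_Iio hs)]
    _ = ∫ u in Iio t, (∫ s in Iic t, K (s, u) ∂f.measure) ∂ν := integral_integral_swap hint
    _ = ∫ u in Iio t, (f t - f u) * q u ∂ν := by
        refine setIntegral_congr_fun measurableSet_Iio fun u hu => ?_
        have hK : (fun s => K (s, u)) = (Ioi u).indicator fun _ => q u := by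
          ext s; simp [K, indicator_apply]
        rw [hK, integral_indicator _root_.measurableSet_Ioi,
          Measure.restrict_restrict _root_.measurableSet_Ioi,
          Ioi_inter_Iic, setIntegral_const, measureReal_def, f.measure_Ioc,
          ENNReal.toReal_ofReal (sub_nonneg.2 (f.mono (le_of_lt hu))), smul_eq_mul]

end StieltjesFunction

theorem integral_inv_one_sub_sq {c : ℝ} (hc : c < 1) :
    ∫ y in (0 : ℝ)..c, ((1 - y)⁻¹) ^ 2 = (1 - c)⁻¹ - 1 := by
  have hne : ∀ y ∈ uIcc 0 c, 1 - y ≠ 0 := fun y hy =>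
    sub_ne_zero.2 (ne_of_gt (lt_of_le_of_lt hy.2 (max_lt one_pos hc)))
  have hderiv (y : ℝ) (hy : y ∈ uIcc 0 c) :
      HasDerivAt (fun y : ℝ => (1 - y)⁻¹) (((1 - y)⁻¹) ^ 2) y := by
    refine (((hasDerivAt_id' y).const_sub 1).inv (hne y hy)).congr_deriv ?_
    rw [neg_neg, one_div, inv_pow]
  rw [intervalIntegral.integral_eq_sub_of_hasDerivAt hderiv
    (((continuousOn_const.sub continuousOn_id).inv₀ hne).pow 2).intervalIntegrable]
  norm_num

section DistributionFunction

variable {H : StieltjesFunction ℝ}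

theorem integrableOn_inv_one_sub_leftLim_pow {μ : Measure ℝ} {s : Set ℝ} {b : ℝ}
    (hb : leftLim H b < 1) (hs : s ⊆ Iic b) (hμs : μ s ≠ ⊤) (n : ℕ) :
    IntegrableOn (fun x => ((1 - leftLim H x)⁻¹) ^ n) s μ := by
  refine Measure.integrableOn_of_bounded (M := ((1 - leftLim H b)⁻¹) ^ n) hμs
    ((H.mono.leftLim.measurable.const_sub 1).inv.pow_const n).aestronglyMeasurable ?_
  refine ae_restrict_of_ae_restrict_of_subset hs
    (ae_restrict_of_forall_mem measurableSet_Iic fun x hx => ?_)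
  have hpos : 0 < 1 - leftLim H b := sub_pos.2 hb
  have hle : 1 - leftLim H b ≤ 1 - leftLim H x := sub_le_sub_left (H.mono.leftLim hx) 1
  rw [norm_pow, Real.norm_of_nonneg (inv_nonneg.2 (hpos.trans_le hle).le)]
  exact pow_le_pow_left₀ (inv_nonneg.2 (hpos.trans_le hle).le) (inv_anti₀ hpos hle) n

theorem setIntegral_Iio_inv_one_sub_leftLim_sq (hbot : Tendsto H atBot (𝓝 0)) {b : ℝ}
    (hcont : ContinuousOn H (Iio b)) (hb : leftLim H b < 1) :
    ∫ s in Iio b, ((1 - leftLim H s)⁻¹) ^ 2 ∂H.measure = (1 - leftLim H b)⁻¹ - 1 := by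
  have hcongr :
      EqOn (fun s => ((1 - leftLim H s)⁻¹) ^ 2) (fun s => ((1 - H s)⁻¹) ^ 2) (Iio b) :=
    fun s hs => by simp only [(hcont.continuousAt (Iio_mem_nhds hs)).continuousWithinAt.leftLim_eq]
  have hc : 0 ≤ leftLim H b :=
    (H.mono.le_of_tendsto hbot (b - 1)).trans (H.mono.le_leftLim (sub_one_lt b))
  rw [setIntegral_congr_fun measurableSet_Iio hcongr,
    H.integral_comp_restrict_Iio (g := fun y => ((1 - y)⁻¹) ^ 2) hbot hcont (by fun_prop),
    ← integral_Ioc_eq_integral_Ioo, ← intervalIntegral.integral_of_le hc,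
    integral_inv_one_sub_sq hb]

theorem setIntegral_Ico_inv_one_sub_leftLim_sq (hbot : Tendsto H atBot (𝓝 0)) {a b : ℝ}
    (hcont : ContinuousOn H (Iio b)) (hb : leftLim H b < 1) (hab : a ≤ b) :
    ∫ s in Ico a b, ((1 - leftLim H s)⁻¹) ^ 2 ∂H.measure
      = (1 - leftLim H b)⁻¹ - (1 - leftLim H a)⁻¹ := by
  have hint := integrableOn_inv_one_sub_leftLim_pow hb Iio_subset_Iic_self
    (by simp [H.measure_Iio hbot] : H.measure (Iio b) ≠ ⊤) 2
  have hsplit := setIntegral_union ((Iio_disjoint_Ici le_rfl).mono_right Ico_subset_Ici_self)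
    measurableSet_Ico (hint.mono_set (Iio_subset_Iio hab)) (hint.mono_set Ico_subset_Iio_self)
  rw [Iio_union_Ico_eq_Iio hab, setIntegral_Iio_inv_one_sub_leftLim_sq hbot hcont hb,
    setIntegral_Iio_inv_one_sub_leftLim_sq hbot (hcont.mono (Iio_subset_Iio hab))
      ((H.mono.leftLim hab).trans_lt hb)] at hsplit
  linarith

theorem integrableOn_Iio_mul_inv_one_sub_leftLim_sq (Hu : StieltjesFunction ℝ)
    (hHu : Tendsto Hu atBot (𝓝 0)) (hbot : Tendsto H atBot (𝓝 0)) {t : ℝ}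
    (ht : leftLim H t < 1) :
    IntegrableOn (fun u => Hu u * ((1 - leftLim H u)⁻¹) ^ 2) (Iio t) H.measure := by
  refine (integrableOn_inv_one_sub_leftLim_pow ht Iio_subset_Iic_self
    (by simp [H.measure_Iio hbot]) 2).bdd_mul (c := Hu t)
    Hu.mono.measurable.aestronglyMeasurable
    (ae_restrict_of_forall_mem measurableSet_Iio fun u hu => ?_)
  rw [Real.norm_of_nonneg (Hu.mono.le_of_tendsto hHu u)]
  exact Hu.mono (le_of_lt hu)

theorem setIntegral_Iic_inv_one_sub_leftLim (Hu : StieltjesFunction ℝ)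
    (hHu : Tendsto Hu atBot (𝓝 0)) (hbot : Tendsto H atBot (𝓝 0)) {t : ℝ}
    (hcont : ContinuousOn H (Iio t)) (ht : leftLim H t < 1) :
    ∫ s in Iic t, (1 - leftLim H s)⁻¹ ∂Hu.measure
      = Hu t * (1 - leftLim H t)⁻¹
        - ∫ s in Iio t, Hu s * ((1 - leftLim H s)⁻¹) ^ 2 ∂H.measure := by
  have hIic : Hu.measure (Iic t) ≠ ⊤ := by simp [Hu.measure_Iic hHu]
  have hq := integrableOn_inv_one_sub_leftLim_pow ht Iio_subset_Iic_self
    (by simp [H.measure_Iio hbot] : H.measure (Iio t) ≠ ⊤) 2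
  have hφ : IntegrableOn (fun s => (1 - leftLim H s)⁻¹) (Iic t) Hu.measure := by
    simpa using integrableOn_inv_one_sub_leftLim_pow ht subset_rfl hIic 1
  have hsub : ∫ s in Iic t, ((1 - leftLim H s)⁻¹ - 1) ∂Hu.measure
      = ∫ s in Iic t, (1 - leftLim H s)⁻¹ ∂Hu.measure - Hu t := by
    rw [integral_sub hφ (integrableOn_const hIic), setIntegral_const, measureReal_def,
      Hu.measure_Iic hHu, sub_zero, ENNReal.toReal_ofReal (Hu.mono.le_of_tendsto hHu t),
      smul_eq_mul, mul_one]
  have hinner : ∫ s in Iic t, ((1 - leftLim H s)⁻¹ - 1) ∂Hu.measure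
      = ∫ s in Iic t, (∫ u in Iio s, ((1 - leftLim H u)⁻¹) ^ 2 ∂H.measure) ∂Hu.measure :=
    setIntegral_congr_fun measurableSet_Iic fun s hs =>
      (setIntegral_Iio_inv_one_sub_leftLim_sq hbot (hcont.mono (Iio_subset_Iio hs))
        ((H.mono.leftLim hs).trans_lt ht)).symm
  have hswap : ∫ u in Iio t, (Hu t - Hu u) * ((1 - leftLim H u)⁻¹) ^ 2 ∂H.measure
      = Hu t * ((1 - leftLim H t)⁻¹ - 1)
        - ∫ u in Iio t, Hu u * ((1 - leftLim H u)⁻¹) ^ 2 ∂H.measure := by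
    simp_rw [sub_mul]
    rw [integral_sub (hq.const_mul _) (integrableOn_Iio_mul_inv_one_sub_leftLim_sq Hu hHu hbot ht),
      integral_const_mul, setIntegral_Iio_inv_one_sub_leftLim_sq hbot hcont ht]
  rw [Hu.setIntegral_Iic_setIntegral_Iio hHu hq, hswap] at hinner
  linarith

theorem setIntegral_Iic_indicator_sub_leftLim_div (Hu : StieltjesFunction ℝ)
    (hHu : Tendsto Hu atBot (𝓝 0)) {t : ℝ} (ht : leftLim H t < 1) (T : ℝ) :
    ∫ s in Iic t, ((if T < s then (1 : ℝ) else 0) - leftLim H s) /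
        (1 - leftLim H s) ^ 2 ∂Hu.measure
      = ∫ s in Iic t, (1 - leftLim H s)⁻¹ ∂Hu.measure
        - ∫ s in Iic (min T t), ((1 - leftLim H s)⁻¹) ^ 2 ∂Hu.measure := by
  have hIic : Hu.measure (Iic t) ≠ ⊤ := by simp [Hu.measure_Iic hHu]
  have hφ : IntegrableOn (fun s => (1 - leftLim H s)⁻¹) (Iic t) Hu.measure := by
    simpa using integrableOn_inv_one_sub_leftLim_pow ht subset_rfl hIic 1
  have hpt : EqOn
      (fun s => ((if T < s then (1 : ℝ) else 0) - leftLim H s) / (1 - leftLim H s) ^ 2)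
      (fun s => (1 - leftLim H s)⁻¹
        - (Iic T).indicator (fun s => ((1 - leftLim H s)⁻¹) ^ 2) s) (Iic t) := fun s hs => by
    have hne : 1 - leftLim H s ≠ 0 := (sub_pos.2 ((H.mono.leftLim hs).trans_lt ht)).ne'
    dsimp only
    by_cases hTs : T < s
    · rw [if_pos hTs, indicator_of_notMem (show s ∉ Iic T from not_le.2 hTs)]
      field_simp
      ring
    · rw [if_neg hTs, indicator_of_mem (show s ∈ Iic T from not_lt.1 hTs)]
      field_simp
      ring
  rw [setIntegral_congr_fun measurableSet_Iic hpt, integral_sub hφ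
      ((integrableOn_inv_one_sub_leftLim_pow ht subset_rfl hIic 2).indicator measurableSet_Iic),
    integral_indicator measurableSet_Iic, Measure.restrict_restrict measurableSet_Iic,
    Iic_inter_Iic]

theorem setIntegral_Iio_indicator_sub_div (Hu : StieltjesFunction ℝ)
    (hHu : Tendsto Hu atBot (𝓝 0)) (hbot : Tendsto H atBot (𝓝 0)) {t : ℝ}
    (hcont : ContinuousOn H (Iio t)) (ht : leftLim H t < 1) (T : ℝ) (δ : Bool) :
    ∫ s in Iio t, ((if T ≤ s ∧ δ = true then (1 : ℝ) else 0) - Hu s) /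
        (1 - leftLim H s) ^ 2 ∂H.measure
      = (if δ = true ∧ T ≤ t then (1 - leftLim H t)⁻¹ - (1 - leftLim H T)⁻¹ else 0)
        - ∫ s in Iio t, Hu s * ((1 - leftLim H s)⁻¹) ^ 2 ∂H.measure := by
  set E := Ici T ∩ {_s | δ = true}
  have hE : MeasurableSet E := measurableSet_Ici.inter (.const _)
  have hpt : EqOn
      (fun s => ((if T ≤ s ∧ δ = true then (1 : ℝ) else 0) - Hu s) / (1 - leftLim H s) ^ 2)
      (fun s => E.indicator (fun s => ((1 - leftLim H s)⁻¹) ^ 2) s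
        - Hu s * ((1 - leftLim H s)⁻¹) ^ 2) (Iio t) := fun s _ => by
    dsimp only
    by_cases hs : T ≤ s ∧ δ = true
    · rw [if_pos hs, indicator_of_mem (show s ∈ E from hs), inv_pow]
      ring
    · rw [if_neg hs, indicator_of_notMem (show s ∉ E from hs), inv_pow]
      ring
  have hq := integrableOn_inv_one_sub_leftLim_pow ht Iio_subset_Iic_self
    (by simp [H.measure_Iio hbot] : H.measure (Iio t) ≠ ⊤) 2
  rw [setIntegral_congr_fun measurableSet_Iio hpt, integral_sub (hq.indicator hE)
      (integrableOn_Iio_mul_inv_one_sub_leftLim_sq Hu hHu hbot ht),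
    integral_indicator hE, Measure.restrict_restrict hE]
  congr 1
  split_ifs with h
  · have hEt : E ∩ Iio t = Ico T t := by
      ext s; simp [E, h.1]
    rw [hEt, setIntegral_Ico_inv_one_sub_leftLim_sq hbot hcont ht h.2]
  · have hEt : E ∩ Iio t = ∅ :=
      eq_empty_of_forall_notMem fun s ⟨⟨hTs, hδ⟩, hst⟩ => h ⟨hδ, hTs.trans hst.le⟩
    rw [hEt, Measure.restrict_empty, integral_zero_measure]

theorem influence_function_bracket_eq (Hu : StieltjesFunction ℝ)
    (hHu : Tendsto Hu atBot (𝓝 0)) (hbot : Tendsto H atBot (𝓝 0)) {t : ℝ}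
    (hcont : ContinuousOn H (Iio t)) (ht : leftLim H t < 1) (T : ℝ) (δ : Bool) :
    ((∫ s in Iic t, ((if T < s then (1 : ℝ) else 0) - leftLim H s) /
          (1 - leftLim H s) ^ 2 ∂Hu.measure)
        + ((if T ≤ t ∧ δ = true then (1 : ℝ) else 0) - Hu t) / (1 - leftLim H t)
        - ∫ s in Iio t, ((if T ≤ s ∧ δ = true then (1 : ℝ) else 0) - Hu s) /
            (1 - leftLim H s) ^ 2 ∂H.measure) =
      (if δ = true ∧ T ≤ t then (1 : ℝ) else 0) / (1 - leftLim H T) -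
        ∫ s in Iic (min T t), ((1 - leftLim H s)⁻¹) ^ 2 ∂Hu.measure := by
  rw [setIntegral_Iic_indicator_sub_leftLim_div Hu hHu ht,
    setIntegral_Iic_inv_one_sub_leftLim Hu hHu hbot hcont ht,
    setIntegral_Iio_indicator_sub_div Hu hHu hbot hcont ht]
  simp only [and_comm (a := T ≤ t)]
  split_ifs <;> ring

end DistributionFunction

theorem influence_function_rewriting_general
    (F G H Hu : StieltjesFunction ℝ) (τc : ℝ)
    -- assumption (A)
    (hFcont : ContinuousOn (⇑F) (Iic τc))
    (hGcont : ContinuousOn (⇑G) (Iio τc))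
    -- `H`, `Hᵘ` are induced by the censoring model
    (hFG : ∀ s, 1 - H s = (1 - F s) * (1 - G s))
    (hFbot : Filter.Tendsto (⇑F) Filter.atBot (nhds 0))
    (hGbot : Filter.Tendsto (⇑G) Filter.atBot (nhds 0))
    (hHubot : Filter.Tendsto (⇑Hu) Filter.atBot (nhds 0))
    (hHτ : leftLim (⇑H) τc < 1)
    -- a realization of the data
    (T : ℝ) (δ : Bool) :
    ∀ t ≤ τc,
      ((∫ s in Iic t, ((if T < s then (1 : ℝ) else 0) - leftLim (⇑H) s) /
          (1 - leftLim (⇑H) s) ^ 2 ∂Hu.measure)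
        + ((if T ≤ t ∧ δ = true then (1 : ℝ) else 0) - Hu t) / (1 - leftLim (⇑H) t)
        - ∫ s in Iio t, ((if T ≤ s ∧ δ = true then (1 : ℝ) else 0) - Hu s) /
            (1 - leftLim (⇑H) s) ^ 2 ∂H.measure) =
        (if δ = true ∧ T ≤ t then (1 : ℝ) else 0) / (1 - leftLim (⇑H) T) -
          ∫ s in Iic (min T t), ((1 - leftLim (⇑H) s)⁻¹) ^ 2 ∂Hu.measure ∧
      infl H Hu (⇑F) t T δ =
        (1 - F t) *
          ((if δ = true ∧ T ≤ t then (1 : ℝ) else 0) / (1 - leftLim (⇑H) T) -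
            ∫ s in Iic (min T t), ((1 - leftLim (⇑H) s)⁻¹) ^ 2 ∂Hu.measure) := by
  have hH : ⇑H = fun s => 1 - (1 - F s) * (1 - G s) := funext fun s => by linarith [hFG s]
  have hHbot : Tendsto H atBot (𝓝 0) := by
    have h1 : Tendsto (fun _ : ℝ => (1 : ℝ)) atBot (𝓝 1) := tendsto_const_nhds
    rw [hH]
    simpa using h1.sub ((h1.sub hFbot).mul (h1.sub hGbot))
  have hHcont : ContinuousOn H (Iio τc) := by
    rw [hH]
    exact continuousOn_const.sub ((continuousOn_const.sub (hFcont.mono Iio_subset_Iic_self)).mul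
      (continuousOn_const.sub hGcont))
  intro t ht
  have hbracket := influence_function_bracket_eq Hu hHubot hHbot (hHcont.mono (Iio_subset_Iio ht))
    ((H.mono.leftLim ht).trans_lt hHτ) T δ
  exact ⟨hbracket, by rw [infl, hbracket]⟩

/-- under assumption (A), the influence function of the Beran estimator can
be rewritten (by integration by parts) as
`g(t,T,δ|x) = (1-F(t|x)) {1{δ=1,T≤t}/(1-H(T⁻|x)) - ∫_{(-∞,T∧t]} dHᵘ(s|x)/(1-H(s⁻|x))²}`.
Here `F`, `G` are the conditional distributions of the survival and censoring times,
`H`, `Hᵘ` the induced conditional distribution of `T` and sub-distribution of the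
uncensored observations (so `1-H = (1-F)(1-G)`, `0 ≤ Hᵘ ≤ H`, `Hᵘ` is continuous up to
`τ_c(x)` and all tend to `0` at `-∞`), with `H(τ_c(x)⁻|x) < 1`. -/
theorem influence_function_rewriting
    (F G H Hu : StieltjesFunction ℝ) (τc : ℝ)
    -- assumption (A)
    (hFcont : ContinuousOn (⇑F) (Iic τc))
    (hGcont : ContinuousOn (⇑G) (Iio τc))
    (hjump : 0 < G τc - leftLim (⇑G) τc)
    -- `H`, `Hᵘ` are induced by the censoring model
    (hFG : ∀ s, 1 - H s = (1 - F s) * (1 - G s))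
    (hHuH : ∀ s, 0 ≤ Hu s ∧ Hu s ≤ H s)
    (hHucont : ContinuousOn (⇑Hu) (Iic τc))
    (hFbot : Filter.Tendsto (⇑F) Filter.atBot (nhds 0))
    (hGbot : Filter.Tendsto (⇑G) Filter.atBot (nhds 0))
    (hHubot : Filter.Tendsto (⇑Hu) Filter.atBot (nhds 0))
    (hHτ : leftLim (⇑H) τc < 1)
    -- a realization of the data
    (T : ℝ) (δ : Bool) (hT : T ≤ τc) :
    ∀ t ≤ τc,
      ((∫ s in Iic t, ((if T < s then (1 : ℝ) else 0) - leftLim (⇑H) s) /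
          (1 - leftLim (⇑H) s) ^ 2 ∂Hu.measure)
        + ((if T ≤ t ∧ δ = true then (1 : ℝ) else 0) - Hu t) / (1 - leftLim (⇑H) t)
        - ∫ s in Iio t, ((if T ≤ s ∧ δ = true then (1 : ℝ) else 0) - Hu s) /
            (1 - leftLim (⇑H) s) ^ 2 ∂H.measure) =
        (if δ = true ∧ T ≤ t then (1 : ℝ) else 0) / (1 - leftLim (⇑H) T) -
          ∫ s in Iic (min T t), ((1 - leftLim (⇑H) s)⁻¹) ^ 2 ∂Hu.measure ∧
      infl H Hu (⇑F) t T δ =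
        (1 - F t) *
          ((if δ = true ∧ T ≤ t then (1 : ℝ) else 0) / (1 - leftLim (⇑H) T) -
            ∫ s in Iic (min T t), ((1 - leftLim (⇑H) s)⁻¹) ^ 2 ∂Hu.measure) :=
  influence_function_rewriting_general F G H Hu τc hFcont hGcont hFG hFbot hGbot hHubot hHτ T δ
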